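/- Let m > 1 be a real number and let v < w be real numbers. Define, for x ∈ (v, w), the membership g(x) = (1 + ((x − w)^2 / (x − v)^2)^{1/(m−1)})^{−1} of the cluster with centroid w. Then g is strictly increasing on the open interval (v, w), and 0 < g(x) < 1 for every x ∈ (v, w). -/
import Mathlib


open Real

/-- **Left-hand branch of a C-FKM fuzzy number is strictly increasing.** For fuzzifier
`m > 1` and adjacent centroids `v < w`, the membership
`g x = (1 + ((x − w)²/(x − v)²)^(1/(m−1)))⁻¹` of the cluster with centroid `w` is
strictly increasing on `(v, w)`, and `0 < g x < 1` for every `x ∈ (v, w)`. -/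
theorem cfkm_left_branch_strict_mono (m v w : ℝ) (hm : 1 < m) (hvw : v < w)
    (g : ℝ → ℝ)
    (hg : ∀ x ∈ Set.Ioo v w,
      g x = (1 + ((x - w) ^ 2 / (x - v) ^ 2) ^ (1 / (m - 1)))⁻¹) :
    StrictMonoOn g (Set.Ioo v w) ∧
    ∀ x ∈ Set.Ioo v w, 0 < g x ∧ g x < 1 := by
  have hme : 0 < 1 / (m - 1) := by
    have : 0 < m - 1 := by linarith
    positivity
  constructor
  · intro x hx y hy hxy
    rw [hg x hx, hg y hy]
    have hx1 : 0 < x - v := by linarith [hx.1]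
    have hx2 : 0 < w - x := by linarith [hx.2]
    have hy1 : 0 < y - v := by linarith [hy.1]
    have hy2 : 0 < w - y := by linarith [hy.2]
    have hbx : 0 < (x - w) ^ 2 / (x - v) ^ 2 := by
      apply div_pos <;> nlinarith
    have hby : 0 < (y - w) ^ 2 / (y - v) ^ 2 := by
      apply div_pos <;> nlinarith
    have key : (y - w) ^ 2 / (y - v) ^ 2 < (x - w) ^ 2 / (x - v) ^ 2 := by
      rw [div_lt_div_iff₀ (by nlinarith) (by nlinarith)]
      have f1 : 0 < (w - x) * (y - v) + (w - y) * (x - v) :=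
        add_pos (mul_pos hx2 hy1) (mul_pos hy2 hx1)
      have f2 : 0 < (w - v) * (y - x) := mul_pos (by linarith) (by linarith)
      nlinarith [mul_pos f1 f2]
    have hr : ((y - w) ^ 2 / (y - v) ^ 2) ^ (1 / (m - 1)) <
        ((x - w) ^ 2 / (x - v) ^ 2) ^ (1 / (m - 1)) :=
      Real.rpow_lt_rpow (le_of_lt hby) key hme
    have hpy : 0 < ((y - w) ^ 2 / (y - v) ^ 2) ^ (1 / (m - 1)) :=
      Real.rpow_pos_of_pos hby _
    have h1 : 0 < 1 + ((y - w) ^ 2 / (y - v) ^ 2) ^ (1 / (m - 1)) := by linarith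
    exact inv_strictAnti₀ h1 (by linarith)
  · intro x hx
    rw [hg x hx]
    have hx1 : 0 < x - v := by linarith [hx.1]
    have hx2 : 0 < w - x := by linarith [hx.2]
    have hbx : 0 < (x - w) ^ 2 / (x - v) ^ 2 := by
      apply div_pos <;> nlinarith
    have hp : 0 < ((x - w) ^ 2 / (x - v) ^ 2) ^ (1 / (m - 1)) :=
      Real.rpow_pos_of_pos hbx _
    constructor
    · positivity
    · rw [inv_lt_one_iff₀]; right; linarith
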